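/- Let V be a finite-dimensional real vector space with a root system R, Δ a base, and σ : V → V a linear involution. Suppose there exists a simple root α ∈ Δ with σ(α) a positive root and σ(α) ≠ ±α. Then the (−1)-eigenspace V⁻ of σ is not contained in the hyperplane {λ ∈ V : ⟨λ, α∨⟩ = 0}⊥-complement corresponding to the Levi generated by α; concretely, there exists λ ∈ V* with σ*(λ) = −λ and ⟨λ, α∨⟩ ≠ 0. -/
import Mathlib


open RealInnerProductSpace

/-- If a linear isometric involution `σ` of a Euclidean space sends a simple root `α` to
a positive root different from `±α`, then the `-1` eigenspace of `σ` contains a vector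
not orthogonal to `α` (i.e. pairing nontrivially with the coroot `α∨`). -/
theorem stmt13 {V : Type*} [NormedAddCommGroup V] [InnerProductSpace ℝ V]
    [FiniteDimensional ℝ V]
    (R Δ Pos : Set V) (hΔR : Δ ⊆ R)
    (σ : V ≃ₗᵢ[ℝ] V) (hσ2 : ∀ v, σ (σ v) = v) (hσR : σ '' R = R)
    (α : V) (hα : α ∈ Δ) (hα0 : α ≠ 0)
    (hαpos : σ α ∈ Pos) (hne1 : σ α ≠ α) (hne2 : σ α ≠ -α) :
    ∃ l : V, σ l = -l ∧ ⟪l, α⟫ ≠ 0 := by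
  refine ⟨α - σ α, ?_, ?_⟩
  · simp [map_sub, hσ2 α, neg_sub]
  · intro h
    rw [inner_sub_left] at h
    have hinner : ⟪σ α, α⟫ = ⟪α, α⟫ := by linarith
    have hnorm : ‖σ α‖ = ‖α‖ := σ.norm_map α
    have : ‖σ α - α‖ ^ 2 = 0 := by
      rw [← real_inner_self_eq_norm_sq]
      rw [inner_sub_sub_self, real_inner_self_eq_norm_sq, real_inner_self_eq_norm_sq,
        hnorm, real_inner_comm] at *
      nlinarith [hinner]
    have h0 : σ α - α = 0 := by
      have := sq_eq_zero_iff.mp this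
      simpa using this
    exact hne1 (sub_eq_zero.mp h0)
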